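/- arXiv:1904.02638 — 5 statements merged into one kernel-verified Lean document; each statement's English description precedes it below -/
import Mathlib

section
/- Let g : ℝ^d → ℝ be a convex differentiable function whose gradient is bounded in Euclidean norm by B > 0 everywhere and is L-Lipschitz continuous. Let C_1, …, C_N ⊆ ℝ^d be convex sets each containing 0 and of diameter at most R, and let {1,…,N} be partitioned into two disjoint sets H (trustworthy) and A (attacked). If points θ_i ∈ C_i for i ∈ H satisfy g((1/N) Σ_{i∈H} θ_i) + (|A|/N)(R·B + (1/2)·L·R²) ≤ 0, then for every choice of points θ_j ∈ C_j for j ∈ A one has g((1/N) Σ_{i=1}^N θ_i) ≤ 0. (In other words, the conservative constraint with additive margin (|A|/N)(RB + LR²/2) implies the worst-case robust constraint over all admissible values of the attacked agents.) -/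
/-!
Only the attacked agents move the average, and since each `C j` contains `0` and has diameter at
most `R`, they move it by at most `(|A|/N)·R`. By the mean value theorem a gradient bounded by `B`
makes `g` `B`-Lipschitz, so `g` grows by at most `(|A|/N)·R·B`, which the margin absorbs.
-/

open Finset

lemma norm_sub_le_of_hasGradientAt_of_norm_le {E : Type*} [NormedAddCommGroup E]
    [InnerProductSpace ℝ E] [CompleteSpace E] {f : E → ℝ} {f' : E → E} {B : ℝ}
    (hf : ∀ x, HasGradientAt f (f' x) x) (hB : ∀ x, ‖f' x‖ ≤ B) (x y : E) :
    ‖f y - f x‖ ≤ B * ‖y - x‖ :=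
  convex_univ.norm_image_sub_le_of_norm_hasFDerivWithin_le
    (fun z _ ↦ (hf z).hasFDerivAt.hasFDerivWithinAt) (fun z _ ↦ by simpa using hB z)
    (Set.mem_univ x) (Set.mem_univ y)

lemma norm_sum_le_card_mul_of_norm_le {ι E : Type*} [SeminormedAddCommGroup E] {s : Finset ι}
    {v : ι → E} {R : ℝ} (h : ∀ i ∈ s, ‖v i‖ ≤ R) : ‖∑ i ∈ s, v i‖ ≤ #s * R :=
  (norm_sum_le_of_le s h).trans_eq (by rw [sum_const, nsmul_eq_mul])

theorem conservative_approximation_general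
    (d N : ℕ) (B L R : ℝ) (hL : 0 < L)
    (g : EuclideanSpace ℝ (Fin d) → ℝ)
    (g' : EuclideanSpace ℝ (Fin d) → EuclideanSpace ℝ (Fin d))
    (hgrad : ∀ x, HasGradientAt g (g' x) x)
    (hgB : ∀ x, ‖g' x‖ ≤ B)
    (C : Fin N → Set (EuclideanSpace ℝ (Fin d)))
    (hC0 : ∀ i, (0 : EuclideanSpace ℝ (Fin d)) ∈ C i)
    (hCdiam : ∀ i, ∀ x ∈ C i, ∀ y ∈ C i, ‖x - y‖ ≤ R)
    (H A : Finset (Fin N)) (hdisj : Disjoint H A) (hcover : H ∪ A = Finset.univ)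
    (θ : Fin N → EuclideanSpace ℝ (Fin d))
    (hfeas : g ((N : ℝ)⁻¹ • ∑ i ∈ H, θ i)
        + ((A.card : ℝ) / N) * (R * B + (1 / 2) * L * R ^ 2) ≤ 0) :
    ∀ φ : Fin N → EuclideanSpace ℝ (Fin d),
      (∀ i ∈ H, φ i = θ i) → (∀ j ∈ A, φ j ∈ C j) →
      g ((N : ℝ)⁻¹ • ∑ i, φ i) ≤ 0 := by
  intro φ hφH hφA
  set x := (N : ℝ)⁻¹ • ∑ i ∈ H, θ i
  set y := (N : ℝ)⁻¹ • ∑ i, φ i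
  have hyx : y - x = (N : ℝ)⁻¹ • ∑ j ∈ A, φ j := by
    simp only [x, y]
    rw [← sum_congr rfl hφH, ← smul_sub, ← hcover, sum_union hdisj, add_sub_cancel_left]
  have hφR : ∀ j ∈ A, ‖φ j‖ ≤ R := fun j hj ↦ by
    simpa using hCdiam j _ (hφA j hj) 0 (hC0 j)
  have hdist : ‖y - x‖ ≤ (N : ℝ)⁻¹ * (#A * R) := by
    rw [hyx, norm_smul, norm_inv, RCLike.norm_natCast]
    exact mul_le_mul_of_nonneg_left (norm_sum_le_card_mul_of_norm_le hφR) (by positivity)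
  have hB : 0 ≤ B := (norm_nonneg _).trans (hgB 0)
  have hgyx : g y - g x ≤ B * ‖y - x‖ :=
    (le_abs_self _).trans (norm_sub_le_of_hasGradientAt_of_norm_le hgrad hgB x y)
  have hmargin : B * ((N : ℝ)⁻¹ * (#A * R)) ≤ (#A / N) * (R * B + (1 / 2) * L * R ^ 2) := by
    have : 0 ≤ (#A / N : ℝ) * ((1 / 2) * L * R ^ 2) := by positivity
    linarith [show B * ((N : ℝ)⁻¹ * (#A * R)) = (#A / N) * (R * B) by ring]
  calc g y ≤ g x + B * ‖y - x‖ := by linarith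
    _ ≤ g x + B * ((N : ℝ)⁻¹ * (#A * R)) := by gcongr
    _ ≤ g x + (#A / N) * (R * B + (1 / 2) * L * R ^ 2) := by gcongr
    _ ≤ 0 := hfeas

/-- Lemma 1 of the paper: the conservative constraint with additive margin
`(|A|/N)·(R·B + L·R²/2)` implies the worst-case robust constraint over all
admissible values of the attacked agents. -/
theorem conservative_approximation
    (d N : ℕ) (hN : 1 ≤ N) (B L R : ℝ) (hB : 0 < B) (hL : 0 < L) (hR : 0 < R)
    (g : EuclideanSpace ℝ (Fin d) → ℝ)
    (g' : EuclideanSpace ℝ (Fin d) → EuclideanSpace ℝ (Fin d))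
    (hgrad : ∀ x, HasGradientAt g (g' x) x)
    (hconv : ConvexOn ℝ Set.univ g)
    (hgB : ∀ x, ‖g' x‖ ≤ B)
    (hgL : ∀ x y, ‖g' x - g' y‖ ≤ L * ‖x - y‖)
    (C : Fin N → Set (EuclideanSpace ℝ (Fin d)))
    (hCconv : ∀ i, Convex ℝ (C i))
    (hC0 : ∀ i, (0 : EuclideanSpace ℝ (Fin d)) ∈ C i)
    (hCdiam : ∀ i, ∀ x ∈ C i, ∀ y ∈ C i, ‖x - y‖ ≤ R)
    (H A : Finset (Fin N)) (hdisj : Disjoint H A) (hcover : H ∪ A = Finset.univ)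
    (θ : Fin N → EuclideanSpace ℝ (Fin d)) (hθ : ∀ i ∈ H, θ i ∈ C i)
    (hfeas : g ((N : ℝ)⁻¹ • ∑ i ∈ H, θ i)
        + ((A.card : ℝ) / N) * (R * B + (1 / 2) * L * R ^ 2) ≤ 0) :
    ∀ φ : Fin N → EuclideanSpace ℝ (Fin d),
      (∀ i ∈ H, φ i = θ i) → (∀ j ∈ A, φ j ∈ C j) →
      g ((N : ℝ)⁻¹ • ∑ i, φ i) ≤ 0 :=
  conservative_approximation_general d N B L R hL g g' hgrad hgB C hC0 hCdiam H A hdisj hcover θ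
    hfeas
end

section
/- Let Z be a real inner product space, let Φ : Z → Z be υ-strongly monotone (⟨Φ(z) − Φ(z'), z − z'⟩ ≥ υ‖z − z'‖² for all z, z') and L_Φ-Lipschitz continuous, and let γ > 0. Let z, z*, e ∈ Z and suppose z⁺ ∈ Z satisfies ‖z⁺ − z*‖ ≤ ‖z − z* − γ(Φ(z) + e − Φ(z*))‖. Then for all c₀ > 0 and c₁ > 0, ‖z⁺ − z*‖² ≤ (1 + 2γ(c₁ − υ) + γ²(1 + c₀)L_Φ²)·‖z − z*‖² + (2γ/c₁ + γ² + γ²/c₀)·‖e‖². -/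
open RealInnerProductSpace

private lemma young_aux (a b c : ℝ) (hc : 0 < c) :
    2 * a * b ≤ c * a ^ 2 + b ^ 2 / c := by
  have hbc : b ^ 2 / c * c = b ^ 2 := div_mul_cancel₀ _ hc.ne'
  nlinarith [sq_nonneg (c * a - b), hc]

private lemma scalar_key (A B C S I J γ υ LΦ c₀ c₁ : ℝ)
    (hγ : 0 < γ) (hc₀ : 0 < c₀) (hc₁ : 0 < c₁)
    (hA : 0 ≤ A) (hB : 0 ≤ B) (hC : 0 ≤ C) (hS : 0 ≤ S)
    (hI : I ≥ υ * A ^ 2) (hJ : -J ≤ A * B)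
    (hCn : C ≤ LΦ * A) (hSn : S ≤ C + B) :
    A ^ 2 - 2 * γ * (I + J) + γ ^ 2 * S ^ 2
      ≤ (1 + 2 * γ * (c₁ - υ) + γ ^ 2 * (1 + c₀) * LΦ ^ 2) * A ^ 2
        + (2 * γ / c₁ + γ ^ 2 + γ ^ 2 / c₀) * B ^ 2 := by
  have hγ2 : (0:ℝ) ≤ γ ^ 2 := sq_nonneg γ
  have hY1 : 2 * A * B ≤ c₁ * A ^ 2 + B ^ 2 / c₁ := young_aux A B c₁ hc₁
  have hY2 : 2 * C * B ≤ c₀ * C ^ 2 + B ^ 2 / c₀ := young_aux C B c₀ hc₀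
  have hS2 : S ^ 2 ≤ (C + B) ^ 2 := pow_le_pow_left₀ hS hSn 2
  have hC2 : C ^ 2 ≤ LΦ ^ 2 * A ^ 2 := by
    have := pow_le_pow_left₀ hC hCn 2
    simpa [mul_pow] using this
  have h5 : -(2 * γ * I) ≤ -(2 * γ * υ * A ^ 2) := by nlinarith [hγ.le]
  have h3 : -(2 * γ * J) ≤ γ * c₁ * A ^ 2 + γ * (B ^ 2 / c₁) := by
    nlinarith [hγ.le]
  have h2 : γ ^ 2 * S ^ 2
      ≤ γ ^ 2 * (1 + c₀) * C ^ 2 + γ ^ 2 * B ^ 2 + γ ^ 2 * (B ^ 2 / c₀) := by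
    have hbound : S ^ 2 ≤ (1 + c₀) * C ^ 2 + B ^ 2 + B ^ 2 / c₀ := by nlinarith
    nlinarith [mul_le_mul_of_nonneg_left hbound hγ2]
  have h4 : γ ^ 2 * (1 + c₀) * C ^ 2 ≤ γ ^ 2 * (1 + c₀) * (LΦ ^ 2 * A ^ 2) := by
    have hpos : (0:ℝ) ≤ γ ^ 2 * (1 + c₀) := by positivity
    exact mul_le_mul_of_nonneg_left hC2 hpos
  have hc1' : γ * (B ^ 2 / c₁) ≤ 2 * γ / c₁ * B ^ 2 := by
    have h0 : (0:ℝ) ≤ γ * B ^ 2 / c₁ := by positivity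
    have heq : 2 * γ / c₁ * B ^ 2 - γ * (B ^ 2 / c₁) = γ * B ^ 2 / c₁ := by
      field_simp; ring
    linarith
  have hc0' : γ ^ 2 * (B ^ 2 / c₀) = γ ^ 2 / c₀ * B ^ 2 := by ring
  have hgd : (0:ℝ) ≤ γ * c₁ * A ^ 2 := by positivity
  ring_nf at h2 h3 h4 h5 hc1' hc0' hgd ⊢
  linarith [h2, h3, h4, h5, hc1', hc0', hgd]

/-- General one-step perturbation inequality from the proof of Theorem 1 of
the paper: for a υ-strongly monotone and `L_Φ`-Lipschitz operator `Φ` and a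
perturbed nonexpansive-projected step, for all `c₀, c₁ > 0`,
`‖z⁺ − z*‖² ≤ (1 + 2γ(c₁ − υ) + γ²(1 + c₀)L_Φ²)‖z − z*‖²
  + (2γ/c₁ + γ² + γ²/c₀)‖e‖²`. -/
theorem one_step_perturbation_inequality
    {Z : Type*} [NormedAddCommGroup Z] [InnerProductSpace ℝ Z]
    (Φ : Z → Z) (υ LΦ : ℝ) (hυ : 0 < υ) (hLΦ : 0 < LΦ)
    (hmono : ∀ z z', ⟪Φ z - Φ z', z - z'⟫ ≥ υ * ‖z - z'‖ ^ 2)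
    (hlip : ∀ z z', ‖Φ z - Φ z'‖ ≤ LΦ * ‖z - z'‖)
    (γ : ℝ) (hγ : 0 < γ)
    (z zstar e zplus : Z)
    (hstep : ‖zplus - zstar‖ ≤ ‖z - zstar - γ • (Φ z + e - Φ zstar)‖) :
    ∀ c₀ > (0 : ℝ), ∀ c₁ > (0 : ℝ),
      ‖zplus - zstar‖ ^ 2
        ≤ (1 + 2 * γ * (c₁ - υ) + γ ^ 2 * (1 + c₀) * LΦ ^ 2) * ‖z - zstar‖ ^ 2
          + (2 * γ / c₁ + γ ^ 2 + γ ^ 2 / c₀) * ‖e‖ ^ 2 := by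
  intro c₀ hc₀ c₁ hc₁
  have hv : Φ z + e - Φ zstar = (Φ z - Φ zstar) + e := by abel
  have h1 : ‖zplus - zstar‖ ^ 2 ≤ ‖(z - zstar) - γ • ((Φ z - Φ zstar) + e)‖ ^ 2 := by
    rw [← hv]
    exact pow_le_pow_left₀ (norm_nonneg _) hstep 2
  have hexp : ‖(z - zstar) - γ • ((Φ z - Φ zstar) + e)‖ ^ 2
      = ‖z - zstar‖ ^ 2
        - 2 * γ * (⟪z - zstar, Φ z - Φ zstar⟫ + ⟪z - zstar, e⟫)
        + γ ^ 2 * ‖(Φ z - Φ zstar) + e‖ ^ 2 := by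
    rw [norm_sub_sq_real, real_inner_smul_right, inner_add_right, norm_smul]
    simp [Real.norm_eq_abs, mul_pow, sq_abs]
    ring
  have hFd : ⟪z - zstar, Φ z - Φ zstar⟫ ≥ υ * ‖z - zstar‖ ^ 2 := by
    rw [real_inner_comm]; exact hmono z zstar
  have hde : -⟪z - zstar, e⟫ ≤ ‖z - zstar‖ * ‖e‖ := by
    have := real_inner_le_norm (z - zstar) (-e)
    simpa [norm_neg] using this
  calc ‖zplus - zstar‖ ^ 2
      ≤ ‖z - zstar‖ ^ 2
        - 2 * γ * (⟪z - zstar, Φ z - Φ zstar⟫ + ⟪z - zstar, e⟫)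
        + γ ^ 2 * ‖(Φ z - Φ zstar) + e‖ ^ 2 := by rw [← hexp]; exact h1
    _ ≤ _ := scalar_key ‖z - zstar‖ ‖e‖ ‖Φ z - Φ zstar‖ ‖(Φ z - Φ zstar) + e‖
        ⟪z - zstar, Φ z - Φ zstar⟫ ⟪z - zstar, e⟫ γ υ LΦ c₀ c₁
        hγ hc₀ hc₁ (norm_nonneg _) (norm_nonneg _) (norm_nonneg _) (norm_nonneg _)
        hFd hde (hlip z zstar) (norm_add_le _ _)
end

section
/- Let Z be a real inner product space, let Φ : Z → Z be υ-strongly monotone (⟨Φ(z) − Φ(z'), z − z'⟩ ≥ υ‖z − z'‖² for all z, z') and L_Φ-Lipschitz continuous, let γ > 0, and let z* ∈ Z. Let (z^{(k)})_{k≥0} and (e^{(k)})_{k≥0} be sequences in Z satisfying ‖z^{(k+1)} − z*‖ ≤ ‖z^{(k)} − z* − γ(Φ(z^{(k)}) + e^{(k)} − Φ(z*))‖ for all k ≥ 0. Then for all k ≥ 0, ‖z^{(k+1)} − z*‖² ≤ (1 − γυ + 2γ²L_Φ²)·‖z^{(k)} − z*‖² + (4γ/υ + 2γ²)·E_k, where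 E_k = ‖e^{(k)}‖². -/
open RealInnerProductSpace

private lemma resilient_pd_aux (υ LΦ γ N D G E S ig ie : ℝ)
    (hυ : 0 < υ) (hγ : 0 < γ)
    (hD0 : 0 ≤ D) (hE0 : 0 ≤ E) (hG0 : 0 ≤ G)
    (hN : N ^ 2 ≤ D ^ 2 - 2 * (γ * (ig + ie)) + γ ^ 2 * S)
    (hig : ig ≥ υ * D ^ 2) (hie : ie ≥ -(D * E))
    (hG : G ≤ LΦ * D) (hS : S ≤ 2 * G ^ 2 + 2 * E ^ 2) :
    N ^ 2 ≤ (1 - γ * υ + 2 * γ ^ 2 * LΦ ^ 2) * D ^ 2 + (4 * γ / υ + 2 * γ ^ 2) * E ^ 2 := by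
  have hyoung : υ * (D * E) ≤ υ ^ 2 / 4 * D ^ 2 + E ^ 2 := by
    nlinarith [sq_nonneg (υ * D - 2 * E)]
  have hG2 : G ^ 2 ≤ LΦ ^ 2 * D ^ 2 := by nlinarith
  have p1 : 2 * γ * υ * (υ * D ^ 2) ≤ 2 * γ * υ * ig :=
    mul_le_mul_of_nonneg_left hig (by positivity)
  have p2 : 2 * γ * υ * -ie ≤ 2 * γ * υ * (D * E) :=
    mul_le_mul_of_nonneg_left (by linarith) (by positivity)
  have p3 : 2 * γ * (υ * (D * E)) ≤ 2 * γ * (υ ^ 2 / 4 * D ^ 2 + E ^ 2) :=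
    mul_le_mul_of_nonneg_left hyoung (by positivity)
  have p4 : υ * γ ^ 2 * S ≤ υ * γ ^ 2 * (2 * G ^ 2 + 2 * E ^ 2) :=
    mul_le_mul_of_nonneg_left hS (by positivity)
  have p5 : υ * γ ^ 2 * G ^ 2 ≤ υ * γ ^ 2 * (LΦ ^ 2 * D ^ 2) :=
    mul_le_mul_of_nonneg_left hG2 (by positivity)
  have p6 : (0:ℝ) ≤ γ * υ ^ 2 * D ^ 2 := by positivity
  have p7 : (0:ℝ) ≤ γ * E ^ 2 := by positivity
  have hN' : υ * N ^ 2 ≤ υ * (D ^ 2 - 2 * (γ * (ig + ie)) + γ ^ 2 * S) :=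
    mul_le_mul_of_nonneg_left hN hυ.le
  have hmain : υ * N ^ 2
      ≤ υ * ((1 - γ * υ + 2 * γ ^ 2 * LΦ ^ 2) * D ^ 2 + (4 * γ / υ + 2 * γ ^ 2) * E ^ 2) := by
    have hdiv : υ * ((1 - γ * υ + 2 * γ ^ 2 * LΦ ^ 2) * D ^ 2 + (4 * γ / υ + 2 * γ ^ 2) * E ^ 2)
        = υ * ((1 - γ * υ + 2 * γ ^ 2 * LΦ ^ 2) * D ^ 2) + (4 * γ + 2 * γ ^ 2 * υ) * E ^ 2 := by
      field_simp
    rw [hdiv]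
    nlinarith [hN', p1, p2, p3, p4, p5, p6, p7]
  exact le_of_mul_le_mul_left hmain hυ

/-- Inequality (24) of Theorem 1 of the paper: one-step contraction of the
resilient primal-dual algorithm with perturbed gradients,
`‖z^{(k+1)} − z*‖² ≤ (1 − γυ + 2γ²L_Φ²)‖z^{(k)} − z*‖² + (4γ/υ + 2γ²)·E_k`
with `E_k = ‖e^{(k)}‖²`. -/
theorem resilient_pd_one_step_bound
    {Z : Type*} [NormedAddCommGroup Z] [InnerProductSpace ℝ Z]
    (Φ : Z → Z) (υ LΦ : ℝ) (hυ : 0 < υ) (hLΦ : 0 < LΦ)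
    (hmono : ∀ z z', ⟪Φ z - Φ z', z - z'⟫ ≥ υ * ‖z - z'‖ ^ 2)
    (hlip : ∀ z z', ‖Φ z - Φ z'‖ ≤ LΦ * ‖z - z'‖)
    (γ : ℝ) (hγ : 0 < γ)
    (zstar : Z) (z e : ℕ → Z)
    (hstep : ∀ k, ‖z (k + 1) - zstar‖ ≤ ‖z k - zstar - γ • (Φ (z k) + e k - Φ zstar)‖) :
    ∀ k, ‖z (k + 1) - zstar‖ ^ 2
        ≤ (1 - γ * υ + 2 * γ ^ 2 * LΦ ^ 2) * ‖z k - zstar‖ ^ 2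
          + (4 * γ / υ + 2 * γ ^ 2) * ‖e k‖ ^ 2 := by
  intro k
  have hsum : Φ (z k) + e k - Φ zstar = (Φ (z k) - Φ zstar) + e k := by abel
  have hs : ‖z (k + 1) - zstar‖ ≤ ‖z k - zstar - γ • ((Φ (z k) - Φ zstar) + e k)‖ := by
    rw [← hsum]; exact hstep k
  have hs2 : ‖z (k + 1) - zstar‖ ^ 2 ≤ ‖z k - zstar - γ • ((Φ (z k) - Φ zstar) + e k)‖ ^ 2 :=
    pow_le_pow_left₀ (norm_nonneg _) hs 2
  have hexp : ‖z k - zstar - γ • ((Φ (z k) - Φ zstar) + e k)‖ ^ 2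
      = ‖z k - zstar‖ ^ 2
        - 2 * (γ * (⟪z k - zstar, Φ (z k) - Φ zstar⟫ + ⟪z k - zstar, e k⟫))
        + γ ^ 2 * ‖(Φ (z k) - Φ zstar) + e k‖ ^ 2 := by
    rw [norm_sub_sq_real, inner_smul_right, inner_add_right, norm_smul,
      Real.norm_eq_abs, mul_pow, sq_abs]
  rw [hexp] at hs2
  have hmk : ⟪z k - zstar, Φ (z k) - Φ zstar⟫ ≥ υ * ‖z k - zstar‖ ^ 2 := by
    have := hmono (z k) zstar
    rwa [real_inner_comm] at this
  have hcs : ⟪z k - zstar, e k⟫ ≥ -(‖z k - zstar‖ * ‖e k‖) := by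
    have h1 := abs_real_inner_le_norm (z k - zstar) (e k)
    have h2 := neg_abs_le (⟪z k - zstar, e k⟫ : ℝ)
    linarith
  have hS : ‖(Φ (z k) - Φ zstar) + e k‖ ^ 2
      ≤ 2 * ‖Φ (z k) - Φ zstar‖ ^ 2 + 2 * ‖e k‖ ^ 2 := by
    have h1 : ‖(Φ (z k) - Φ zstar) + e k‖ ≤ ‖Φ (z k) - Φ zstar‖ + ‖e k‖ := norm_add_le _ _
    nlinarith [norm_nonneg ((Φ (z k) - Φ zstar) + e k), norm_nonneg (Φ (z k) - Φ zstar),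
      norm_nonneg (e k), sq_nonneg (‖Φ (z k) - Φ zstar‖ - ‖e k‖)]
  exact resilient_pd_aux υ LΦ γ _ _ _ _ _ _ _ hυ hγ (norm_nonneg _) (norm_nonneg _)
    (norm_nonneg _) hs2 hmk hcs (hlip (z k) zstar) hS
end

section
/- Let Z be a real inner product space, let Φ : Z → Z be υ-strongly monotone and L_Φ-Lipschitz continuous, let z* ∈ Z, and let 0 < γ < υ/(2L_Φ²). Let (z^{(k)})_{k≥0} and (e^{(k)})_{k≥0} be sequences in Z satisfying ‖z^{(k+1)} − z*‖ ≤ ‖z^{(k)} − z* − γ(Φ(z^{(k)}) + e^{(k)} − Φ(z*))‖ for all k ≥ 0, and suppose ‖e^{(k)}‖² ≤ Ē for all k, where Ē ≥ 0. Then limsup_{k→∞} ‖z^{(k)} − z*‖² ≤ ((4/υ + 2γ)/(υ − 2γL_Φ²))·Ē. -/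
open RealInnerProductSpace

set_option maxHeartbeats 1600000 in
/-- Asymptotic bound (25) of Theorem 1 of the paper: with step size
`0 < γ < υ/(2L_Φ²)` and uniformly bounded squared perturbations
`‖e^{(k)}‖² ≤ Ē`, the resilient primal-dual iterates satisfy
`limsup_k ‖z^{(k)} − z*‖² ≤ ((4/υ + 2γ)/(υ − 2γL_Φ²))·Ē`. -/
theorem resilient_pd_asymptotic_bound
    {Z : Type*} [NormedAddCommGroup Z] [InnerProductSpace ℝ Z]
    (Φ : Z → Z) (υ LΦ : ℝ) (hυ : 0 < υ) (hLΦ : 0 < LΦ)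
    (hmono : ∀ z z', ⟪Φ z - Φ z', z - z'⟫ ≥ υ * ‖z - z'‖ ^ 2)
    (hlip : ∀ z z', ‖Φ z - Φ z'‖ ≤ LΦ * ‖z - z'‖)
    (zstar : Z)
    (γ : ℝ) (hγ : 0 < γ) (hγ2 : γ < υ / (2 * LΦ ^ 2))
    (z e : ℕ → Z)
    (hstep : ∀ k, ‖z (k + 1) - zstar‖ ≤ ‖z k - zstar - γ • (Φ (z k) + e k - Φ zstar)‖)
    (Ebar : ℝ) (hEbar : 0 ≤ Ebar) (hE : ∀ k, ‖e k‖ ^ 2 ≤ Ebar) :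
    Filter.limsup (fun k => ‖z k - zstar‖ ^ 2) Filter.atTop
      ≤ (4 / υ + 2 * γ) / (υ - 2 * γ * LΦ ^ 2) * Ebar := by
  have hD : 0 < υ - 2 * γ * LΦ ^ 2 := by
    have := (lt_div_iff₀ (by positivity)).mp hγ2
    nlinarith
  rcases subsingleton_or_nontrivial Z with hZ | hZ
  · have h0 : (fun k => ‖z k - zstar‖ ^ 2) = fun _ : ℕ => (0 : ℝ) := by
      funext k
      have : z k - zstar = 0 := Subsingleton.elim _ _
      simp [this]
    rw [h0, Filter.limsup_const]
    have : 0 ≤ 4 / υ + 2 * γ := by positivity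
    positivity
  · -- υ ≤ LΦ
    obtain ⟨v, hv⟩ := exists_ne (0 : Z)
    have hvn : 0 < ‖v‖ := norm_pos_iff.mpr hv
    have hυL : υ ≤ LΦ := by
      have h1 := hmono v 0
      have h2 := hlip v 0
      have h3 := real_inner_le_norm (Φ v - Φ 0) (v - 0)
      simp only [sub_zero] at h1 h2 h3
      have hv2 : ‖v‖ ^ 2 = ‖v‖ * ‖v‖ := sq ‖v‖ ▸ sq ‖v‖ ▸ (pow_two ‖v‖)
      nlinarith [mul_le_mul_of_nonneg_right h2 (norm_nonneg v), mul_pos hvn hvn]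
    set ρ : ℝ := 1 - γ * υ + 2 * γ ^ 2 * LΦ ^ 2 with hρ
    set c : ℝ := (γ * υ⁻¹ + 2 * γ ^ 2) * Ebar with hc
    have hρ0 : 0 ≤ ρ := by nlinarith [sq_nonneg (2 * γ * LΦ - 1), sq_nonneg (γ * LΦ)]
    have hρ1 : ρ < 1 := by
      have : 0 < γ * (υ - 2 * γ * LΦ ^ 2) := mul_pos hγ hD
      nlinarith
    have hc0 : 0 ≤ c := by
      have : 0 ≤ γ * υ⁻¹ + 2 * γ ^ 2 := by positivity
      exact mul_nonneg this hEbar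
    set a : ℕ → ℝ := fun k => ‖z k - zstar‖ ^ 2 with ha
    have hrec : ∀ k, a (k + 1) ≤ ρ * a k + c := by
      intro k
      set d : Z := z k - zstar with hd
      set g : Z := Φ (z k) - Φ zstar with hg
      set w : Z := Φ (z k) + e k - Φ zstar with hw
      have hwge : w = g + e k := by rw [hw, hg]; abel
      have hstep2 : a (k + 1) ≤ ‖d - γ • w‖ ^ 2 := by
        have := hstep k
        have h1 : (0:ℝ) ≤ ‖z (k+1) - zstar‖ := norm_nonneg _
        simpa [ha, hd] using pow_le_pow_left₀ h1 this 2
      have hexp : ‖d - γ • w‖ ^ 2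
          = ‖d‖ ^ 2 - 2 * γ * ⟪d, w⟫ + γ ^ 2 * ‖w‖ ^ 2 := by
        rw [norm_sub_sq_real, real_inner_smul_right, norm_smul]
        rw [mul_pow]
        simp [abs_of_pos hγ]
        ring
      have hinner : ⟪d, w⟫ = ⟪g, d⟫ + ⟪d, e k⟫ := by
        rw [hwge, inner_add_right, real_inner_comm d g]
      have hm : ⟪g, d⟫ ≥ υ * ‖d‖ ^ 2 := hmono (z k) zstar
      have hcs : ⟪d, e k⟫ ≥ -(‖d‖ * ‖e k‖) := by
        have := real_inner_le_norm d (-(e k))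
        simpa [inner_neg_right, neg_le] using this
      have hgn : ‖g‖ ≤ LΦ * ‖d‖ := hlip (z k) zstar
      have hwn : ‖w‖ ^ 2 ≤ 2 * LΦ ^ 2 * ‖d‖ ^ 2 + 2 * ‖e k‖ ^ 2 := by
        have h1 : ‖w‖ ≤ ‖g‖ + ‖e k‖ := by rw [hwge]; exact norm_add_le _ _
        nlinarith [norm_nonneg w, norm_nonneg g, norm_nonneg (e k), norm_nonneg d,
          sq_nonneg (‖g‖ - ‖e k‖)]
      have hyoung : 2 * (‖d‖ * ‖e k‖) ≤ υ * ‖d‖ ^ 2 + ‖e k‖ ^ 2 * υ⁻¹ := by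
        have h := sq_nonneg (υ * ‖d‖ - ‖e k‖)
        have h2 : 0 < υ := hυ
        rw [← sub_nonneg]
        have key : υ * ‖d‖ ^ 2 + ‖e k‖ ^ 2 * υ⁻¹ - 2 * (‖d‖ * ‖e k‖)
            = (υ * ‖d‖ - ‖e k‖) ^ 2 / υ := by field_simp; ring
        rw [key]; positivity
      have hEk := hE k
      have hEk0 : (0:ℝ) ≤ ‖e k‖ ^ 2 := sq_nonneg _
      have hak : a k = ‖d‖ ^ 2 := rfl
      calc a (k + 1) ≤ ‖d - γ • w‖ ^ 2 := hstep2
        _ = ‖d‖ ^ 2 - 2 * γ * (⟪g, d⟫ + ⟪d, e k⟫) + γ ^ 2 * ‖w‖ ^ 2 := by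
            rw [hexp, hinner]
        _ ≤ ρ * a k + c := by
            rw [hak, hρ, hc]
            have hγυ : 0 < γ * υ⁻¹ := by positivity
            have f1 : γ * (υ * ‖d‖ ^ 2) ≤ γ * ⟪g, d⟫ :=
              mul_le_mul_of_nonneg_left hm hγ.le
            have f2 : γ * (-(‖d‖ * ‖e k‖)) ≤ γ * ⟪d, e k⟫ :=
              mul_le_mul_of_nonneg_left hcs hγ.le
            have f3 : γ * (2 * (‖d‖ * ‖e k‖)) ≤ γ * (υ * ‖d‖ ^ 2 + ‖e k‖ ^ 2 * υ⁻¹) :=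
              mul_le_mul_of_nonneg_left hyoung hγ.le
            have f4 : γ ^ 2 * ‖w‖ ^ 2 ≤ γ ^ 2 * (2 * LΦ ^ 2 * ‖d‖ ^ 2 + 2 * ‖e k‖ ^ 2) :=
              mul_le_mul_of_nonneg_left hwn (sq_nonneg γ)
            have f5 : γ * υ⁻¹ * ‖e k‖ ^ 2 ≤ γ * υ⁻¹ * Ebar :=
              mul_le_mul_of_nonneg_left hEk hγυ.le
            have f6 : γ ^ 2 * ‖e k‖ ^ 2 ≤ γ ^ 2 * Ebar :=
              mul_le_mul_of_nonneg_left hEk (sq_nonneg γ)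
            linarith
    set M : ℝ := c / (1 - ρ) with hM
    have hM0 : 0 ≤ M := div_nonneg hc0 (by linarith)
    have hbd : ∀ k, a k ≤ ρ ^ k * a 0 + M := by
      intro k
      induction k with
      | zero => simpa using le_add_of_nonneg_right (a := a 0) hM0
      | succ n ih =>
        have h1 : a (n + 1) ≤ ρ * a n + c := hrec n
        have h2 : ρ * a n ≤ ρ * (ρ ^ n * a 0 + M) := mul_le_mul_of_nonneg_left ih hρ0
        have h3 : ρ * M + c = M := by
          have hne : (1 - ρ) ≠ 0 := by linarith
          have : M * (1 - ρ) = c := div_mul_cancel₀ c hne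
          linarith [this]
          
        calc a (n + 1) ≤ ρ * (ρ ^ n * a 0 + M) + c := by linarith
          _ = ρ ^ (n + 1) * a 0 + (ρ * M + c) := by ring
          _ = ρ ^ (n + 1) * a 0 + M := by rw [h3]
    have htend : Filter.Tendsto (fun k => ρ ^ k * a 0 + M) Filter.atTop (nhds M) := by
      have h1 := tendsto_pow_atTop_nhds_zero_of_lt_one hρ0 hρ1
      have h2 := (h1.mul_const (a 0)).add_const M
      simpa using h2
    have hls : Filter.limsup a Filter.atTop ≤ M := by
      have h1 : Filter.limsup a Filter.atTop
          ≤ Filter.limsup (fun k => ρ ^ k * a 0 + M) Filter.atTop :=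
        Filter.limsup_le_limsup (Filter.Eventually.of_forall hbd)
          (Filter.isCoboundedUnder_le_of_le Filter.atTop (fun k => sq_nonneg _))
          htend.isBoundedUnder_le
      rw [htend.limsup_eq] at h1
      exact h1
    refine hls.trans ?_
    have h1ρ : 1 - ρ = γ * (υ - 2 * γ * LΦ ^ 2) := by rw [hρ]; ring
    have hυne : υ ≠ 0 := ne_of_gt hυ
    have hγne : γ ≠ 0 := ne_of_gt hγ
    have hDne : υ - 2 * γ * LΦ ^ 2 ≠ 0 := ne_of_gt hD
    have key : M = (1 / υ + 2 * γ) / (υ - 2 * γ * LΦ ^ 2) * Ebar := by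
      rw [hM, hc, h1ρ]
      field_simp
    rw [key]
    gcongr
    norm_num
end

section
/- Let υ > 0, γ > 0 with γ·υ ≤ 1, let G ≥ 0, and let (g_k)_{k≥0} be a sequence of reals with |g_k| ≤ G for all k. Define a sequence (λ_k)_{k≥0} by λ_0 ≥ 0 and λ_{k+1} = max(0, λ_k + γ(g_k − υ·λ_k)). Then λ_k ≤ max(λ_0, G/υ) for all k ≥ 0; in particular, the dual iterates are uniformly bounded. -/
/-- Boundedness of the dual iterates of the regularized projected dual ascent
step `λ_{k+1} = [λ_k + γ(g_k − υλ_k)]_+` (claim after Lemma 2 of the paper):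
if `|g_k| ≤ G` for all `k` and `γυ ≤ 1`, then `λ_k ≤ max(λ_0, G/υ)` for all `k`. -/
theorem dual_iterates_bounded
    (υ γ G : ℝ) (hυ : 0 < υ) (hγ : 0 < γ) (hγυ : γ * υ ≤ 1) (hG : 0 ≤ G)
    (g : ℕ → ℝ) (hg : ∀ k, |g k| ≤ G)
    (lam : ℕ → ℝ) (hlam0 : 0 ≤ lam 0)
    (hrec : ∀ k, lam (k + 1) = max 0 (lam k + γ * (g k - υ * lam k))) :
    ∀ k, lam k ≤ max (lam 0) (G / υ) := by
  set M := max (lam 0) (G / υ) with hM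
  have hMG : G / υ ≤ M := le_max_right _ _
  have hM0 : 0 ≤ M := le_trans (by positivity) hMG
  intro k
  induction k with
  | zero => exact le_max_left _ _
  | succ k ih =>
    rw [hrec k]
    apply max_le hM0
    have hgk : g k ≤ G := (abs_le.mp (hg k)).2
    have h1 : lam k + γ * (g k - υ * lam k)
        = (1 - γ * υ) * lam k + γ * g k := by ring
    rw [h1]
    have h2 : (1 - γ * υ) * lam k ≤ (1 - γ * υ) * M :=
      mul_le_mul_of_nonneg_left ih (by linarith)
    have h3 : γ * g k ≤ γ * υ * M := by
      calc γ * g k ≤ γ * G := mul_le_mul_of_nonneg_left hgk hγ.le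
        _ = γ * υ * (G / υ) := by field_simp
        _ ≤ γ * υ * M := mul_le_mul_of_nonneg_left hMG (by positivity)
    nlinarith
end
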